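/- Let Z be a random variable on a probability space with 0 ≤ Z ≤ 1 almost surely, let c > 0, and define β₁, β₂ : [0,1] → ℝ by β₁(b) = 𝔼[max(b, Z)] − c and β₂(b) = 𝔼[max(b, Z, β₁(max(b, Z)))] − c. Define the threshold α by: α = 0 if β₁(0) < 0, and otherwise α is the unique point of [0,1) with β₁(α) = α. Then β₂(b) ≥ β₁(b) for every b ∈ [0,1], and β₂(b) = β₁(b) for every b ∈ [α, 1]. -/

import Mathlib

open MeasureTheory

/-!
`β₁` is, up to the constant `c`, the function `b ↦ 𝔼[max b Z]`, which is `1`-Lipschitz because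
`b ↦ max b z` is. Hence `β₁ b - b` is antitone, so `β₁ b ≤ b` for every `b ≥ α`: at `α` this is
the fixed-point equation (or, when `α = 0`, the inequality `β₁ 0 < 0`). For `b ≥ α` the inner
maximum `max M (β₁ M)`, `M = max b Z ≥ α`, is therefore `M` itself, which gives `β₂ b = β₁ b`;
and `β₂ ≥ β₁` holds in general since `max M (β₁ M) ≥ M`.
-/

theorem LipschitzWith.antitone_sub_id {f : ℝ → ℝ} (hf : LipschitzWith 1 f) :
    Antitone fun x => f x - x := by
  intro x y hxy
  have h : f y - f x ≤ y - x := by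
    simpa [Real.dist_eq, abs_of_nonneg (sub_nonneg.2 hxy)] using
      (le_abs_self _).trans (hf.dist_le_mul y x)
  linarith

theorem LipschitzWith.integrable_comp {α E F : Type*} [MeasurableSpace α] {μ : Measure α}
    [IsFiniteMeasure μ] [NormedAddCommGroup E] [NormedAddCommGroup F] {K : NNReal} {g : E → F}
    (hg : LipschitzWith K g) {f : α → E} (hf : Integrable f μ) : Integrable (g ∘ f) μ := by
  refine Integrable.mono' ((hf.norm.const_mul K).add (integrable_const ‖g 0‖))
    (hg.continuous.comp_aestronglyMeasurable hf.1) (ae_of_all _ fun x => ?_)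
  have h := hg.norm_sub_le (f x) 0
  rw [sub_zero] at h
  simpa using (norm_le_norm_sub_add (g (f x)) (g 0)).trans (add_le_add_left h _)

section IntegralMax

variable {Ω : Type*} [MeasurableSpace Ω] {μ : Measure Ω} {Z : Ω → ℝ}

theorem integrable_max_const [IsFiniteMeasure μ] (hZ : Integrable Z μ) (b : ℝ) :
    Integrable (fun ω => max b (Z ω)) μ :=
  (integrable_const b).sup hZ

theorem lipschitzWith_integral_max_const [IsProbabilityMeasure μ] (hZ : Integrable Z μ) :
    LipschitzWith 1 fun b => ∫ ω, max b (Z ω) ∂μ := by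
  refine LipschitzWith.of_dist_le_mul fun x y => ?_
  rw [NNReal.coe_one, one_mul, dist_eq_norm, Real.dist_eq,
    ← integral_sub (integrable_max_const hZ x) (integrable_max_const hZ y)]
  simpa using norm_integral_le_of_norm_le_const (μ := μ) (C := |x - y|)
    (f := fun ω => max x (Z ω) - max y (Z ω))
    (ae_of_all μ fun ω => (Real.norm_eq_abs _).trans_le (abs_max_sub_max_le_abs x y (Z ω)))

end IntegralMax

theorem beta_two_ge_beta_one_general
    {Ω : Type*} [MeasurableSpace Ω] (μ : Measure Ω) [IsProbabilityMeasure μ]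
    (Z : Ω → ℝ) (hZmeas : Measurable Z)
    (hZ01 : ∀ᵐ ω ∂μ, Z ω ∈ Set.Icc (0 : ℝ) 1)
    (c : ℝ)
    (β₁ β₂ : ℝ → ℝ)
    (hβ₁ : ∀ b : ℝ, β₁ b = (∫ ω, max b (Z ω) ∂μ) - c)
    (hβ₂ : ∀ b : ℝ, β₂ b = (∫ ω, max (max b (Z ω)) (β₁ (max b (Z ω))) ∂μ) - c)
    (α : ℝ)
    (hαneg : β₁ 0 < 0 → α = 0)
    (hαpos : 0 ≤ β₁ 0 → α ∈ Set.Ico (0 : ℝ) 1 ∧ β₁ α = α) :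
    (∀ b ∈ Set.Icc (0 : ℝ) 1, β₁ b ≤ β₂ b) ∧
    (∀ b ∈ Set.Icc α 1, β₂ b = β₁ b) := by
  have hZ : Integrable Z μ := Integrable.of_bound hZmeas.aestronglyMeasurable 1 <| by
    filter_upwards [hZ01] with ω hω
    rw [Real.norm_eq_abs, abs_le]
    constructor <;> linarith [hω.1, hω.2]
  have hlip : LipschitzWith 1 β₁ := by
    simpa [funext hβ₁] using (lipschitzWith_integral_max_const hZ).sub (LipschitzWith.const c)
  have hβ₁_le_self : ∀ x, α ≤ x → β₁ x ≤ x := by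
    intro x hx
    rcases lt_or_ge (β₁ 0) 0 with h | h
    · have := hlip.antitone_sub_id (hαneg h ▸ hx : (0 : ℝ) ≤ x)
      simp only [sub_zero] at this
      linarith
    · have := hlip.antitone_sub_id hx
      simp only [(hαpos h).2, sub_self] at this
      linarith
  refine ⟨fun b _ => ?_, fun b hb => ?_⟩
  · rw [hβ₁, hβ₂]
    have hM := integrable_max_const hZ b
    exact sub_le_sub_right (integral_mono hM (hM.sup (hlip.integrable_comp hM))
      fun ω => le_max_left _ _) c
  · rw [hβ₁, hβ₂]
    congr 1
    exact integral_congr_ae <| ae_of_all μ fun ω =>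
      max_eq_left (hβ₁_le_self _ (hb.1.trans (le_max_left b (Z ω))))

/-- Lemma 4: with `β₁(b) = 𝔼[max(b, Z)] − c`,
`β₂(b) = 𝔼[max(b, Z, β₁(max(b, Z)))] − c`, and the SF threshold `α`
(zero when `β₁(0) < 0`, the unique fixed point of `β₁` in `[0,1)` otherwise),
we have `β₂ ≥ β₁` on `[0,1]` and `β₂ = β₁` on `[α, 1]`. -/
theorem beta_two_ge_beta_one
    {Ω : Type*} [MeasurableSpace Ω] (μ : Measure Ω) [IsProbabilityMeasure μ]
    (Z : Ω → ℝ) (hZmeas : Measurable Z)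
    (hZ01 : ∀ᵐ ω ∂μ, Z ω ∈ Set.Icc (0 : ℝ) 1)
    (c : ℝ) (hc : 0 < c)
    (β₁ β₂ : ℝ → ℝ)
    (hβ₁ : ∀ b : ℝ, β₁ b = (∫ ω, max b (Z ω) ∂μ) - c)
    (hβ₂ : ∀ b : ℝ, β₂ b = (∫ ω, max (max b (Z ω)) (β₁ (max b (Z ω))) ∂μ) - c)
    (α : ℝ)
    (hαneg : β₁ 0 < 0 → α = 0)
    (hαpos : 0 ≤ β₁ 0 → α ∈ Set.Ico (0 : ℝ) 1 ∧ β₁ α = α) :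
    (∀ b ∈ Set.Icc (0 : ℝ) 1, β₁ b ≤ β₂ b) ∧
    (∀ b ∈ Set.Icc α 1, β₂ b = β₁ b) :=
  beta_two_ge_beta_one_general μ Z hZmeas hZ01 c β₁ β₂ hβ₁ hβ₂ α hαneg hαpos
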